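/- Let $1<p<\infty$, $n\in\mathbb{N}$, and let $\mathcal{Z}_{2n+1}=(z_k)_{k=0}^{2n}$ with $0\le z_0<z_1<\dots<z_{2n}<1$ be interpolation nodes such that the Marcinkiewicz--Zygmund inequalities $C_2\|T\|_{\ell_p(\mathcal{Z}_{2n+1})}\le\|T\|_p\le C_1\|T\|_{\ell_p(\mathcal{Z}_{2n+1})}$ hold for all $T\in\mathcal{T}_n$, with positive constants $C_1,C_2$. Let $L_n^{\mathcal{Z}}(f)$ be the unique trigonometric polynomial in $\mathcal{T}_n$ with $L_n^{\mathcal{Z}}(f)(z_k)=f(z_k)$ for $k=0,\dots,2n$. Then for every bounded measurable 1-periodic function $f$: $\|f-L_n^{\mathcal{Z}}(f)\|_p\le(1+C_1C_2^{-1})\,\widetilde{E}_n(f)_p$. -/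

import Mathlib

open MeasureTheory Filter Finset

noncomputable def LpNorm (p : ℝ) (f : ℝ → ℝ) : ℝ :=
  (∫ x in (0:ℝ)..1, |f x| ^ p) ^ (1 / p)

def MemLpT (p : ℝ) (f : ℝ → ℝ) : Prop :=
  Function.Periodic f 1 ∧ Measurable f ∧
    IntervalIntegrable (fun x => |f x| ^ p) MeasureTheory.volume 0 1

noncomputable def Delta (r : ℕ) (h : ℝ) (f : ℝ → ℝ) (x : ℝ) : ℝ :=
  ∑ ν ∈ Finset.range (r + 1), ((-1 : ℝ) ^ ν * (r.choose ν : ℝ)) * f (x + ((r : ℝ) - (ν : ℝ)) * h)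

noncomputable def omegaMod (r : ℕ) (p : ℝ) (f : ℝ → ℝ) (δ : ℝ) : ℝ :=
  sSup {y | ∃ h : ℝ, 0 < h ∧ h < δ ∧ y = LpNorm p (Delta r h f)}

noncomputable def steklov (r : ℕ) (δ : ℝ) (f : ℝ → ℝ) (x : ℝ) : ℝ :=
  (-1 : ℝ) ^ (r + 1) * (((2 * r).choose r : ℝ))⁻¹ * (2 / δ) *
    ∫ t in (-(δ / 2))..(δ / 2),
      ∑ ν ∈ Finset.range r,
        (-1 : ℝ) ^ ν * (((2 * r).choose ν : ℝ)) * f (x + (((r : ℝ) - (ν : ℝ)) / (r : ℝ)) * t)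

noncomputable def ellp (p : ℝ) (n : ℕ) (x : ℕ → ℝ) (f : ℝ → ℝ) : ℝ :=
  ((1 / (n : ℝ)) * ∑ k ∈ Finset.range n, |f (x k)| ^ p) ^ (1 / p)

def SobolevW (s : ℕ) (g : ℝ → ℝ) : Prop :=
  Function.Periodic g 1 ∧ ContDiff ℝ (s : ℕ∞) g

noncomputable def localMod (r : ℕ) (f : ℝ → ℝ) (x δ : ℝ) : ℝ :=
  sSup {y | ∃ t h : ℝ, t ∈ Set.Icc (x - r * δ / 2) (x + r * δ / 2) ∧
    (t + r * h) ∈ Set.Icc (x - r * δ / 2) (x + r * δ / 2) ∧ y = |Delta r h f t|}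

noncomputable def tauMod (r : ℕ) (p : ℝ) (f : ℝ → ℝ) (δ : ℝ) : ℝ :=
  (∫ x in (0:ℝ)..1, localMod r f x δ ^ p) ^ (1 / p)

def IsTrigPoly (n : ℕ) (T : ℝ → ℝ) : Prop :=
  ∃ c : ℤ → ℂ, ∀ x : ℝ, (T x : ℂ) =
    ∑ ℓ ∈ Finset.Icc (-(n : ℤ)) (n : ℤ),
      c ℓ * Complex.exp (2 * Real.pi * Complex.I * (ℓ : ℂ) * (x : ℂ))

noncomputable def tildeE (n : ℕ) (p : ℝ) (f : ℝ → ℝ) : ℝ :=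
  sInf {y | ∃ Q q : ℝ → ℝ, IsTrigPoly n Q ∧ IsTrigPoly n q ∧
    (∀ x, q x ≤ f x ∧ f x ≤ Q x) ∧ y = LpNorm p (fun x => Q x - q x)}

noncomputable def dirichlet (n : ℕ) (x : ℝ) : ℝ :=
  ∑ ℓ ∈ Finset.Icc (-(n : ℤ)) (n : ℤ), Real.cos (2 * Real.pi * (ℓ : ℝ) * x)

noncomputable def lagrange (n : ℕ) (f : ℝ → ℝ) (x : ℝ) : ℝ :=
  (1 / (2 * (n : ℝ) + 1)) * ∑ k ∈ Finset.range (2 * n + 1),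
    f ((k : ℝ) / (2 * (n : ℝ) + 1)) * dirichlet n (x - (k : ℝ) / (2 * (n : ℝ) + 1))

def NodesOK (γ : ℝ) (X : ℕ → ℕ → ℝ) : Prop :=
  ∀ n : ℕ, 1 ≤ n →
    (0 ≤ X n 0) ∧ (∀ k, k + 1 < n → X n k < X n (k + 1)) ∧ (X n (n - 1) < 1) ∧
    (∀ k, k + 1 < n → γ / (n : ℝ) ≤ X n (k + 1) - X n k) ∧
    (γ / (n : ℝ) ≤ 1 + X n 0 - X n (n - 1))

def NodesOrd (X : ℕ → ℕ → ℝ) : Prop :=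
  ∀ n : ℕ, 1 ≤ n →
    (0 ≤ X n 0) ∧ (∀ k, k + 1 < n → X n k < X n (k + 1)) ∧ (X n (n - 1) < 1)

def SamplingForm (p : ℝ) (X : ℕ → ℕ → ℝ) (φ : ℕ → ℕ → ℝ → ℝ)
    (G : ℕ → (ℝ → ℝ) → ℝ → ℝ) : Prop :=
  (∀ n k, MemLpT p (φ n k)) ∧
  ∀ (n : ℕ) (f : ℝ → ℝ) (x : ℝ), G n f x = ∑ k ∈ Finset.range n, f (X n k) * φ n k x

def CondC1 (p K1 : ℝ) (X : ℕ → ℕ → ℝ) (G : ℕ → (ℝ → ℝ) → ℝ → ℝ) : Prop :=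
  ∀ f : ℝ → ℝ, MemLpT p f → ∀ n : ℕ, 1 ≤ n → LpNorm p (G n f) ≤ K1 * ellp p n (X n) f

def CondC1' (p K2 : ℝ) (X : ℕ → ℕ → ℝ) (G : ℕ → (ℝ → ℝ) → ℝ → ℝ) : Prop :=
  ∀ f : ℝ → ℝ, MemLpT p f → ∀ n : ℕ, 1 ≤ n → K2 * ellp p n (X n) f ≤ LpNorm p (G n f)

def CondC2' (p K3 : ℝ) (s : ℕ) (G : ℕ → (ℝ → ℝ) → ℝ → ℝ) : Prop :=
  ∀ g : ℝ → ℝ, SobolevW s g → ∀ n : ℕ, 1 ≤ n →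
    LpNorm p (fun x => g x - G n g x) ≤ K3 / (n : ℝ) ^ s * LpNorm p (iteratedDeriv s g)

def CondC3 (p K5 : ℝ) (s : ℕ) (G : ℕ → (ℝ → ℝ) → ℝ → ℝ) : Prop :=
  ∀ f : ℝ → ℝ, MemLpT p f → ∀ n : ℕ, 1 ≤ n →
    SobolevW s (G n f) ∧
    (1 / (n : ℝ) ^ s) * LpNorm p (iteratedDeriv s (G n f)) ≤
      K5 * omegaMod s p (G n f) (1 / (n : ℝ))

noncomputable def Gprev (G : ℕ → (ℝ → ℝ) → ℝ → ℝ) (f : ℝ → ℝ) (ν : ℕ) : ℝ → ℝ :=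
  if ν = 0 then fun _ => 0 else G (2 ^ (ν - 1)) f

def CondC4 (p K4 : ℝ) (s : ℕ) (G : ℕ → (ℝ → ℝ) → ℝ → ℝ) (f : ℝ → ℝ) : Prop :=
  ∀ ν : ℕ,
    SobolevW s (fun x => G (2 ^ ν) f x - Gprev G f ν x) ∧
    LpNorm p (iteratedDeriv s (fun x => G (2 ^ ν) f x - Gprev G f ν x)) ≤
      K4 * 2 ^ (s * ν) * LpNorm p (fun x => G (2 ^ ν) f x - Gprev G f ν x)

noncomputable def Kfun (s : ℕ) (p : ℝ) (n : ℕ) (x : ℕ → ℝ) (f : ℝ → ℝ) : ℝ :=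
  sInf {y | ∃ g : ℝ → ℝ, SobolevW s g ∧
    y = ellp p n x (fun t => f t - g t) + LpNorm p (fun t => f t - g t) +
        (1 / (n : ℝ) ^ s) * LpNorm p (iteratedDeriv s g)}

/-! If `q ≤ f ≤ Q`, split `f - L = (f - q) + (q - L)`. The first part is dominated pointwise by
`Q - q`. Since `L = f` at the nodes, `|q - L| ≤ Q - q` there, so the two Marcinkiewicz–Zygmund
inequalities give `‖q - L‖_p ≤ C₁ ‖q - L‖_ℓp ≤ C₁ ‖Q - q‖_ℓp ≤ C₁ C₂⁻¹ ‖Q - q‖_p`. -/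

open Set

local notation "μ₀₁" => volume.restrict (Ioc (0 : ℝ) 1)

lemma LpNorm_eq_toReal_eLpNorm {p : ℝ} (hp : 0 < p) {g : ℝ → ℝ}
    (hg : AEStronglyMeasurable g μ₀₁) :
    LpNorm p g = (eLpNorm g (ENNReal.ofReal p) μ₀₁).toReal := by
  have hp0 : ENNReal.ofReal p ≠ 0 := by simp [hp]
  rw [eLpNorm_eq_lintegral_rpow_enorm_toReal hp0 ENNReal.ofReal_ne_top,
    ENNReal.toReal_ofReal hp.le, LpNorm, intervalIntegral.integral_of_le zero_le_one,
    integral_eq_lintegral_of_nonneg_ae (Eventually.of_forall fun x => by positivity)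
      (hg.aemeasurable.abs.pow_const p).aestronglyMeasurable,
    ← ENNReal.toReal_rpow]
  congr 2
  refine lintegral_congr fun x => ?_
  rw [← ENNReal.ofReal_rpow_of_nonneg (abs_nonneg _) hp.le, ← Real.norm_eq_abs, ofReal_norm]

lemma LpNorm_add_le {p : ℝ} (hp : 1 ≤ p) {g h : ℝ → ℝ}
    (hg : MemLp g (ENNReal.ofReal p) μ₀₁) (hh : MemLp h (ENNReal.ofReal p) μ₀₁) :
    LpNorm p (fun x => g x + h x) ≤ LpNorm p g + LpNorm p h := by
  have hp0 : 0 < p := one_pos.trans_le hp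
  rw [LpNorm_eq_toReal_eLpNorm (g := fun x => g x + h x) hp0 (hg.1.add hh.1),
    LpNorm_eq_toReal_eLpNorm hp0 hg.1, LpNorm_eq_toReal_eLpNorm hp0 hh.1,
    ← ENNReal.toReal_add hg.eLpNorm_ne_top hh.eLpNorm_ne_top]
  exact ENNReal.toReal_mono (ENNReal.add_ne_top.2 ⟨hg.eLpNorm_ne_top, hh.eLpNorm_ne_top⟩)
    (eLpNorm_add_le hg.1 hh.1 (ENNReal.one_le_ofReal.2 hp))

lemma LpNorm_mono {p : ℝ} (hp : 0 < p) {g h : ℝ → ℝ} (hg : AEStronglyMeasurable g μ₀₁)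
    (hh : MemLp h (ENNReal.ofReal p) μ₀₁) (hle : ∀ x, |g x| ≤ |h x|) :
    LpNorm p g ≤ LpNorm p h := by
  rw [LpNorm_eq_toReal_eLpNorm hp hg, LpNorm_eq_toReal_eLpNorm hp hh.1]
  exact ENNReal.toReal_mono hh.eLpNorm_ne_top (eLpNorm_mono hle)

lemma Continuous.memLp_restrict_Ioc_zero_one {p : ℝ} {g : ℝ → ℝ} (hg : Continuous g) :
    MemLp g (ENNReal.ofReal p) μ₀₁ := by
  obtain ⟨C, hC⟩ := (isCompact_Icc (a := (0 : ℝ)) (b := 1)).exists_bound_of_continuousOn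
    hg.continuousOn
  refine MemLp.of_bound hg.aestronglyMeasurable C ?_
  filter_upwards [ae_restrict_mem measurableSet_Ioc] with x hx
  exact hC x (Ioc_subset_Icc_self hx)

lemma IsTrigPoly.continuous {n : ℕ} {T : ℝ → ℝ} (hT : IsTrigPoly n T) : Continuous T := by
  obtain ⟨c, hc⟩ := hT
  have hT_eq : T = fun x : ℝ => (∑ ℓ ∈ Icc (-(n : ℤ)) (n : ℤ),
      c ℓ * Complex.exp (2 * Real.pi * Complex.I * (ℓ : ℂ) * (x : ℂ))).re := by
    funext x
    rw [← hc x, Complex.ofReal_re]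
  rw [hT_eq]
  refine Complex.continuous_re.comp (continuous_finsetSum _ fun ℓ _ => continuous_const.mul ?_)
  exact Complex.continuous_exp.comp (continuous_const.mul Complex.continuous_ofReal)

lemma IsTrigPoly.sub {n : ℕ} {T S : ℝ → ℝ} (hT : IsTrigPoly n T) (hS : IsTrigPoly n S) :
    IsTrigPoly n (fun x => T x - S x) := by
  obtain ⟨c, hc⟩ := hT
  obtain ⟨d, hd⟩ := hS
  refine ⟨c - d, fun x => ?_⟩
  simp only [Complex.ofReal_sub, hc, hd, ← Finset.sum_sub_distrib, Pi.sub_apply, sub_mul]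

lemma isTrigPoly_const (n : ℕ) (M : ℝ) : IsTrigPoly n (fun _ => M) := by
  refine ⟨Pi.single 0 (M : ℂ), fun x => ?_⟩
  rw [Finset.sum_eq_single_of_mem 0 (by simp) fun ℓ _ hℓ => by simp [hℓ]]
  simp

lemma ellp_mono {p : ℝ} (hp : 0 < p) {m : ℕ} {z : ℕ → ℝ} {g h : ℝ → ℝ}
    (hle : ∀ k < m, |g (z k)| ≤ |h (z k)|) :
    ellp p m z g ≤ ellp p m z h := by
  unfold ellp
  gcongr (_ * ∑ _ ∈ _, ?_ ^ _) ^ _ with k hk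
  exact hle k (Finset.mem_range.1 hk)

lemma LpNorm_sub_le_of_bracket {p C₁ C₂ : ℝ} (hp : 1 ≤ p) (hC₁ : 0 ≤ C₁) (hC₂ : 0 < C₂)
    {m : ℕ} {z : ℕ → ℝ} {f L Q q : ℝ → ℝ} (hf : Measurable f) (hL : Continuous L)
    (hQ : Continuous Q) (hq : Continuous q) (hqfQ : ∀ x, q x ≤ f x ∧ f x ≤ Q x)
    (hLf : ∀ k < m, L (z k) = f (z k))
    (hupper : LpNorm p (fun x => q x - L x) ≤ C₁ * ellp p m z (fun x => q x - L x))
    (hlower : C₂ * ellp p m z (fun x => Q x - q x) ≤ LpNorm p (fun x => Q x - q x)) :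
    LpNorm p (fun x => f x - L x) ≤ (1 + C₁ * C₂⁻¹) * LpNorm p (fun x => Q x - q x) := by
  have hp0 : 0 < p := one_pos.trans_le hp
  have hfq_le : ∀ x, |f x - q x| ≤ |Q x - q x| := fun x => by
    rw [abs_of_nonneg (by linarith [hqfQ x]), abs_of_nonneg (by linarith [hqfQ x])]
    linarith [hqfQ x]
  have hQq_mem := (hQ.sub hq).memLp_restrict_Ioc_zero_one (p := p)
  have hfq_mem : MemLp (fun x => f x - q x) (ENNReal.ofReal p) μ₀₁ :=
    hQq_mem.mono (hf.sub hq.measurable).aestronglyMeasurable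
      (Eventually.of_forall fun x => hfq_le x)
  have hfq : LpNorm p (fun x => f x - q x) ≤ LpNorm p (fun x => Q x - q x) :=
    LpNorm_mono hp0 hfq_mem.1 hQq_mem hfq_le
  have hqL_nodes : ellp p m z (fun x => q x - L x) ≤ ellp p m z (fun x => Q x - q x) := by
    refine ellp_mono hp0 fun k hk => ?_
    obtain ⟨hqf, hfQ⟩ := hqfQ (z k)
    rw [hLf k hk, abs_of_nonpos (by linarith), abs_of_nonneg (by linarith)]
    linarith
  have hqL : LpNorm p (fun x => q x - L x) ≤ C₁ * C₂⁻¹ * LpNorm p (fun x => Q x - q x) :=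
    calc LpNorm p (fun x => q x - L x)
        ≤ C₁ * ellp p m z (fun x => Q x - q x) := hupper.trans (by gcongr)
      _ ≤ C₁ * (C₂⁻¹ * LpNorm p (fun x => Q x - q x)) := by
          gcongr
          rwa [le_inv_mul_iff₀ hC₂]
      _ = C₁ * C₂⁻¹ * LpNorm p (fun x => Q x - q x) := by ring
  calc LpNorm p (fun x => f x - L x)
      = LpNorm p (fun x => (f x - q x) + (q x - L x)) := by simp only [sub_add_sub_cancel]
    _ ≤ LpNorm p (fun x => f x - q x) + LpNorm p (fun x => q x - L x) :=
        LpNorm_add_le hp hfq_mem (hq.sub hL).memLp_restrict_Ioc_zero_one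
    _ ≤ (1 + C₁ * C₂⁻¹) * LpNorm p (fun x => Q x - q x) := by linarith

lemma le_mul_tildeE {n : ℕ} {p a c : ℝ} {f : ℝ → ℝ} (hc : 0 < c) (hf : ∃ M, ∀ x, |f x| ≤ M)
    (h : ∀ Q q, IsTrigPoly n Q → IsTrigPoly n q → (∀ x, q x ≤ f x ∧ f x ≤ Q x) →
      a ≤ c * LpNorm p (fun x => Q x - q x)) :
    a ≤ c * tildeE n p f := by
  obtain ⟨M, hM⟩ := hf
  rw [← div_le_iff₀' hc]
  refine le_csInf ⟨_, fun _ => M, fun _ => -M, isTrigPoly_const n M, isTrigPoly_const n (-M),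
    fun x => abs_le.1 (hM x), rfl⟩ ?_
  rintro _ ⟨Q, q, hQ, hq, hqfQ, rfl⟩
  exact (div_le_iff₀' hc).2 (h Q q hQ hq hqfQ)

theorem stmt19_general (p C1 C2 : ℝ) (hp : 1 < p) (n : ℕ)
    (z : ℕ → ℝ) (hC1 : 0 < C1) (hC2 : 0 < C2)
    (hMZ : ∀ T : ℝ → ℝ, IsTrigPoly n T →
      C2 * ellp p (2 * n + 1) z T ≤ LpNorm p T ∧ LpNorm p T ≤ C1 * ellp p (2 * n + 1) z T) :
    ∀ f L : ℝ → ℝ, Function.Periodic f 1 → Measurable f → (∃ M : ℝ, ∀ x, |f x| ≤ M) →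
      IsTrigPoly n L → (∀ k, k ≤ 2 * n → L (z k) = f (z k)) →
      LpNorm p (fun x => f x - L x) ≤ (1 + C1 * C2⁻¹) * tildeE n p f := by
  intro f L _ hf hf_bdd hL hLf
  refine le_mul_tildeE (by positivity) hf_bdd fun Q q hQ hq hqfQ => ?_
  exact LpNorm_sub_le_of_bracket hp.le hC1.le hC2 hf hL.continuous hQ.continuous hq.continuous
    hqfQ (fun k hk => hLf k (Nat.lt_succ_iff.1 hk)) (hMZ _ (hq.sub hL)).2 (hMZ _ (hQ.sub hq)).1

theorem stmt19 (p C1 C2 : ℝ) (hp : 1 < p) (n : ℕ) (hn : 1 ≤ n)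
    (z : ℕ → ℝ) (hz0 : 0 ≤ z 0) (hzmono : ∀ k, k + 1 ≤ 2 * n → z k < z (k + 1))
    (hzlast : z (2 * n) < 1) (hC1 : 0 < C1) (hC2 : 0 < C2)
    (hMZ : ∀ T : ℝ → ℝ, IsTrigPoly n T →
      C2 * ellp p (2 * n + 1) z T ≤ LpNorm p T ∧ LpNorm p T ≤ C1 * ellp p (2 * n + 1) z T) :
    ∀ f L : ℝ → ℝ, Function.Periodic f 1 → Measurable f → (∃ M : ℝ, ∀ x, |f x| ≤ M) →
      IsTrigPoly n L → (∀ k, k ≤ 2 * n → L (z k) = f (z k)) →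
      LpNorm p (fun x => f x - L x) ≤ (1 + C1 * C2⁻¹) * tildeE n p f :=
  stmt19_general p C1 C2 hp n z hC1 hC2 hMZ
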